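/- Let G be a *-graph in which every vertex has even degree. Then G contains a Vassiliev obstruct if and only if there exists a partition of the edge set of G into edge-disjoint cycles such that two of the cycles of the partition have exactly one crossing with each other. -/

import Mathlib

/-!
We model a finite multigraph combinatorially by its half-edges ("darts"):
`edgeInv` is a fixed-point-free involution pairing the two darts of each edge,
and the vertices are the cycles of the permutation `rot`; the cycle of `rot`
through a dart is a chosen orientation of the unoriented cyclic order
(the *-structure) at that vertex.  All notions defined below are invariant
under reversing the chosen orientation at a vertex, so such a structure
faithfully represents a *-graph.  An embedding of the graph into the sphere
(equivalently, the plane) is modelled, as usual in topological graph theory,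
by a rotation system whose Euler characteristic is `2` on every connected
component; it is a *-embedding when the rotation at each vertex agrees with
the *-structure or with its reversal.
-/

/-- A *-graph, encoded by half-edges (darts). -/
structure StarGraph where
  /-- the type of darts (half-edges) -/
  D : Type
  [fintypeD : Fintype D]
  [decEqD : DecidableEq D]
  /-- the fixed-point-free involution matching the two darts of each edge -/
  edgeInv : Equiv.Perm D
  /-- a permutation whose cycles are the vertices; its cycle through a dart is a
  chosen orientation of the unoriented cyclic order (*-structure) at that vertex -/
  rot : Equiv.Perm D
  edgeInv_invol : ∀ d, edgeInv (edgeInv d) = d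
  edgeInv_ne : ∀ d, edgeInv d ≠ d

attribute [instance] StarGraph.fintypeD StarGraph.decEqD

namespace StarGraph

variable (G : StarGraph)

/-- Two darts emanate from the same vertex iff they lie on the same cycle of `rot`. -/
def SameVertex (d e : G.D) : Prop := G.rot.SameCycle d e

/-- The degree of the vertex from which the dart `d` emanates. -/
noncomputable def degree (d : G.D) : ℕ := Nat.card {e : G.D // G.SameVertex d e}

/-- The number of cycles (orbits, including fixed points) of a permutation. -/
noncomputable def cycleCount {α : Type*} (f : Equiv.Perm α) : ℕ :=
  Nat.card (Quotient (Equiv.Perm.SameCycle.setoid f))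

/-- The number of vertices. -/
noncomputable def numVertices : ℕ := cycleCount G.rot

/-- The number of edges. -/
noncomputable def numEdges : ℕ := Fintype.card G.D / 2

/-- The number of connected components. -/
noncomputable def numComponents : ℕ :=
  Nat.card (Quotient (Relation.EqvGen.setoid (fun d e : G.D => e = G.rot d ∨ e = G.edgeInv d)))

/-- The number of faces of the embedding determined by the rotation system `ρ`:
the number of cycles of the face permutation `ρ * edgeInv`. -/
noncomputable def numFaces (ρ : Equiv.Perm G.D) : ℕ := cycleCount (ρ * G.edgeInv)

/-- `ρ` is a rotation system compatible with the *-structure:  at each vertex it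
agrees with the chosen orientation of the cyclic order or with its reversal. -/
def IsCompatibleRotation (ρ : Equiv.Perm G.D) : Prop :=
  ∀ d : G.D, (∀ e, G.SameVertex d e → ρ e = G.rot e) ∨
             (∀ e, G.SameVertex d e → ρ e = G.rot⁻¹ e)

/-- `ρ` is a rotation system describing a *-embedding of `G` into the sphere
(equivalently, the plane): it is compatible with the *-structure and has Euler
characteristic `2` on each connected component. -/
def IsPlanarStarEmbedding (ρ : Equiv.Perm G.D) : Prop :=
  G.IsCompatibleRotation ρ ∧
    (G.numVertices : ℤ) - G.numEdges + G.numFaces ρ = 2 * G.numComponents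

/-- `G` admits a *-embedding into the plane. -/
def StarPlanar : Prop := ∃ ρ : Equiv.Perm G.D, G.IsPlanarStarEmbedding ρ

end StarGraph

/-- A cycle in the sense of Vassiliev's planarity criterion: a closed walk,
recorded by the cyclically ordered sequence of darts it traverses, that repeats
no edge (repeated vertices are allowed). -/
structure ClosedTrail (G : StarGraph) where
  /-- the number of edges of the cycle -/
  len : ℕ
  len_pos : 0 < len
  /-- the dart along which the walk leaves its `i`-th vertex -/
  dart : ZMod len → G.D
  /-- the walk is closed: the head of each traversed edge is the tail of the next -/
  next_sameVertex : ∀ i, G.SameVertex (G.edgeInv (dart i)) (dart (i + 1))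
  /-- no edge is repeated -/
  edges_injective : ∀ i j, (dart i = dart j ∨ dart i = G.edgeInv (dart j)) → i = j

/-- Two closed trails have no common edge. -/
def ClosedTrail.EdgeDisjoint {G : StarGraph} (A B : ClosedTrail G) : Prop :=
  ∀ i j, A.dart i ≠ B.dart j ∧ A.dart i ≠ G.edgeInv (B.dart j)

/-- The least positive number of steps needed to get from `x` to `y` along the
permutation `σ` (junk value `0` if `y` is not on the cycle of `x`). -/
noncomputable def stepsTo {α : Type*} (σ : Equiv.Perm α) (x y : α) : ℕ :=
  sInf {m : ℕ | 0 < m ∧ (σ ^ m) x = y}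

/-- The four darts `a₁, a₂, b₁, b₂`, lying on one cycle of `σ`, appear in this
cycle in alternating order: starting at `a₁`, one of `b₁, b₂` is met strictly
before `a₂` and the other strictly after.  This is invariant under replacing
`σ` by `σ⁻¹`, i.e. it only depends on the unoriented cyclic order. -/
def Alternating {α : Type*} (σ : Equiv.Perm α) (a₁ a₂ b₁ b₂ : α) : Prop :=
  (stepsTo σ a₁ b₁ < stepsTo σ a₁ a₂ ∧ stepsTo σ a₁ a₂ < stepsTo σ a₁ b₂) ∨
  (stepsTo σ a₁ b₂ < stepsTo σ a₁ a₂ ∧ stepsTo σ a₁ a₂ < stepsTo σ a₁ b₁)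

/-- The pair of passes `(i, j)` is a crossing of the closed trails `A` and `B`:
at its `i`-th step `A` passes through a vertex `v` along the half-edges
`A₁ = edgeInv (A.dart (i-1))` (incoming) and `A₂ = A.dart i` (outgoing), `B`
passes through the same vertex `v` at its `j`-th step along `B₁, B₂`, and
`A₁, B₁, A₂, B₂` alternate in the cyclic order at `v`.  Counting crossings
means counting such pairs `(i, j)`, i.e. crossings are counted with
multiplicity. -/
def ClosedTrail.IsCrossing {G : StarGraph} (A B : ClosedTrail G)
    (p : ZMod A.len × ZMod B.len) : Prop :=
  G.SameVertex (A.dart p.1) (B.dart p.2) ∧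
  Alternating G.rot (G.edgeInv (A.dart (p.1 - 1))) (A.dart p.1)
    (G.edgeInv (B.dart (p.2 - 1))) (B.dart p.2)

/-- A Vassiliev obstruct: a pair of edge-disjoint cycles having exactly one
crossing (with multiplicity). -/
def HasVassilievObstruct (G : StarGraph) : Prop :=
  ∃ A B : ClosedTrail G, A.EdgeDisjoint B ∧
    Nat.card {p : ZMod A.len × ZMod B.len // A.IsCrossing B p} = 1
/-!
Deleting the edges of a Vassiliev obstruct `A, B` leaves every vertex of even degree, since a
closed trail uses an even number of half-edges at each vertex. The remaining edges then split
into edge-disjoint closed trails (Veblen): a trail that has not returned to its starting vertex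
has used an odd number of half-edges at its current vertex, so an even vertex always offers an
unused one to continue along, and a longest trail is closed. These trails together with `A` and
`B` partition the edges; the converse is immediate.
-/

open Finset StarGraph

namespace StarGraph

variable {G : StarGraph}

instance : DecidableRel G.SameVertex := fun d e =>
  inferInstanceAs (Decidable (G.rot.SameCycle d e))

theorem SameVertex.refl (d : G.D) : G.SameVertex d d :=
  Equiv.Perm.SameCycle.refl _ d

theorem SameVertex.symm {d e : G.D} (h : G.SameVertex d e) : G.SameVertex e d :=
  Equiv.Perm.SameCycle.symm h

theorem SameVertex.trans {d e f : G.D} (h : G.SameVertex d e) (h' : G.SameVertex e f) :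
    G.SameVertex d f :=
  Equiv.Perm.SameCycle.trans h h'

theorem sameVertex_congr_right {v d e : G.D} (h : G.SameVertex d e) :
    G.SameVertex v d ↔ G.SameVertex v e :=
  ⟨fun h' => h'.trans h, fun h' => h'.trans h.symm⟩

theorem edgeInv_eq_iff {d e : G.D} : G.edgeInv d = e ↔ d = G.edgeInv e := by
  constructor <;> rintro rfl <;> rw [G.edgeInv_invol]

def EdgeClosed (S : Finset G.D) : Prop := ∀ e ∈ S, G.edgeInv e ∈ S

theorem edgeClosed_univ : G.EdgeClosed univ := fun _ _ => mem_univ _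

theorem EdgeClosed.sdiff {S T : Finset G.D} (hS : G.EdgeClosed S) (hT : G.EdgeClosed T) :
    G.EdgeClosed (S \ T) := by
  intro e he
  rw [mem_sdiff] at he ⊢
  refine ⟨hS e he.1, fun h => he.2 ?_⟩
  simpa only [G.edgeInv_invol] using hT _ h

def degreeIn (S : Finset G.D) (v : G.D) : ℕ := #{e ∈ S | G.SameVertex v e}

theorem degreeIn_univ (v : G.D) : G.degreeIn univ v = G.degree v := by
  rw [degreeIn, degree, Nat.card_eq_fintype_card, Fintype.card_subtype]

theorem even_degreeIn_sdiff {S T : Finset G.D} {v : G.D} (hTS : T ⊆ S)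
    (hS : Even (G.degreeIn S v)) (hT : Even (G.degreeIn T v)) : Even (G.degreeIn (S \ T) v) := by
  have hsplit : G.degreeIn S v = G.degreeIn (S \ T) v + G.degreeIn T v := by
    rw [degreeIn, degreeIn, degreeIn, ← card_union_of_disjoint
      (disjoint_filter_filter sdiff_disjoint), ← filter_union, sdiff_union_of_subset hTS]
  rw [hsplit] at hS
  exact (Nat.even_add.mp hS).mpr hT

section EdgeDarts

variable {κ : Type*}

def edgeDarts [Fintype κ] (w : κ → G.D) : Finset G.D :=
  univ.image w ∪ univ.image (G.edgeInv ∘ w)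

def EdgeInjective (w : κ → G.D) : Prop := ∀ i j, w i = w j ∨ w i = G.edgeInv (w j) → i = j

theorem mem_edgeDarts [Fintype κ] {w : κ → G.D} {e : G.D} :
    e ∈ G.edgeDarts w ↔ ∃ i, w i = e ∨ w i = G.edgeInv e := by
  simp only [edgeDarts, mem_union, mem_image, mem_univ, true_and, Function.comp_apply,
    edgeInv_eq_iff, exists_or]

theorem edgeClosed_edgeDarts [Fintype κ] (w : κ → G.D) : G.EdgeClosed (G.edgeDarts w) := by
  intro e he
  obtain ⟨i, h⟩ := mem_edgeDarts.mp he
  exact mem_edgeDarts.mpr ⟨i, by rwa [G.edgeInv_invol, or_comm]⟩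

theorem edgeDarts_subset_iff [Fintype κ] {w : κ → G.D} {S : Finset G.D} (hS : G.EdgeClosed S) :
    G.edgeDarts w ⊆ S ↔ ∀ i, w i ∈ S := by
  refine ⟨fun h i => h (mem_edgeDarts.mpr ⟨i, Or.inl rfl⟩), fun h e he => ?_⟩
  obtain ⟨i, rfl | hi⟩ := mem_edgeDarts.mp he
  · exact h i
  · simpa only [hi, G.edgeInv_invol] using hS _ (h i)

theorem EdgeInjective.injective {w : κ → G.D} (hw : G.EdgeInjective w) :
    Function.Injective w :=
  fun i j h => hw i j (Or.inl h)

theorem EdgeInjective.ne_edgeInv {w : κ → G.D} (hw : G.EdgeInjective w) (i j : κ) :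
    w i ≠ G.edgeInv (w j) := by
  intro h
  obtain rfl := hw i j (Or.inr h)
  exact G.edgeInv_ne _ h.symm

theorem degreeIn_edgeDarts [Fintype κ] {w : κ → G.D} (hw : G.EdgeInjective w) (v : G.D) :
    G.degreeIn (G.edgeDarts w) v =
      #{i | G.SameVertex v (w i)} + #{i | G.SameVertex v (G.edgeInv (w i))} := by
  have hdisj : Disjoint (univ.image w) (univ.image (G.edgeInv ∘ w)) := by
    simp only [disjoint_left, mem_image, mem_univ, true_and, Function.comp_apply]
    rintro _ ⟨i, rfl⟩ ⟨j, hj⟩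
    exact hw.ne_edgeInv i j hj.symm
  rw [degreeIn, edgeDarts, filter_union, card_union_of_disjoint (disjoint_filter_filter hdisj),
    filter_image, filter_image,
    card_image_of_injective _ hw.injective,
    card_image_of_injective _ (G.edgeInv.injective.comp hw.injective)]
  rfl

end EdgeDarts

end StarGraph

namespace ClosedTrail

variable {G : StarGraph}

instance (T : ClosedTrail G) : NeZero T.len := ⟨T.len_pos.ne'⟩

def darts (T : ClosedTrail G) : Finset G.D := G.edgeDarts T.dart

theorem mem_darts {T : ClosedTrail G} {e : G.D} :
    e ∈ T.darts ↔ ∃ i, T.dart i = e ∨ T.dart i = G.edgeInv e :=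
  mem_edgeDarts

theorem edgeClosed_darts (T : ClosedTrail G) : G.EdgeClosed T.darts := edgeClosed_edgeDarts _

/-- Shifting the index by one matches the arrivals of a closed trail at a vertex with its
departures. -/
theorem even_degreeIn_darts (T : ClosedTrail G) (v : G.D) :
    Even (G.degreeIn T.darts v) := by
  have harrive :
      #{i | G.SameVertex v (G.edgeInv (T.dart i))} = #{i | G.SameVertex v (T.dart i)} :=
    calc #{i | G.SameVertex v (G.edgeInv (T.dart i))}
        = #{i | G.SameVertex v (T.dart (i + 1))} := by
          simp only [sameVertex_congr_right (T.next_sameVertex _)]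
      _ = #{i | G.SameVertex v (T.dart i)} := card_equiv (Equiv.addRight 1) (by simp)
  rw [darts, degreeIn_edgeDarts T.edges_injective, harrive]
  exact ⟨_, rfl⟩

theorem edgeDisjoint_iff {A B : ClosedTrail G} :
    A.EdgeDisjoint B ↔ Disjoint A.darts B.darts := by
  refine ⟨fun h => disjoint_left.mpr fun e heA heB => ?_,
    fun h i j => ⟨fun he => ?_, fun he => ?_⟩⟩
  · obtain ⟨i, hi⟩ := mem_darts.mp heA
    obtain ⟨j, hj⟩ := mem_darts.mp heB
    rcases hi with hi | hi <;> rcases hj with hj | hj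
    · exact (h i j).1 (hi.trans hj.symm)
    · exact (h i j).2 (by rw [hj, G.edgeInv_invol, hi])
    · exact (h i j).2 (by rw [hi, hj])
    · exact (h i j).1 (hi.trans hj.symm)
  · exact disjoint_left.mp h (mem_darts.mpr ⟨i, Or.inl rfl⟩)
      (mem_darts.mpr ⟨j, Or.inl he.symm⟩)
  · exact disjoint_left.mp h (mem_darts.mpr ⟨i, Or.inl rfl⟩)
      (mem_darts.mpr ⟨j, Or.inr (by rw [he, G.edgeInv_invol])⟩)

end ClosedTrail

namespace StarGraph

variable {G : StarGraph} {m : ℕ} {w : Fin (m + 1) → G.D}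

structure IsTrail (w : Fin (m + 1) → G.D) : Prop where
  sameVertex_succ : ∀ i : Fin m, G.SameVertex (G.edgeInv (w i.castSucc)) (w i.succ)
  edgeInjective : G.EdgeInjective w

def IsTrail.toClosedTrail (hw : G.IsTrail w)
    (hclosed : G.SameVertex (G.edgeInv (w (Fin.last m))) (w 0)) : ClosedTrail G where
  len := m + 1
  len_pos := m.succ_pos
  dart := w
  next_sameVertex := by
    have hnext : ∀ i : Fin (m + 1), G.SameVertex (G.edgeInv (w i)) (w (i + 1)) := by
      intro i
      induction i using Fin.lastCases with
      | last => rwa [Fin.last_add_one]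
      | cast j => rw [Fin.coeSucc_eq_succ]; exact hw.sameVertex_succ j
    exact hnext
  edges_injective := hw.edgeInjective

theorem IsTrail.odd_degreeIn_edgeDarts (hw : G.IsTrail w)
    (hopen : ¬ G.SameVertex (G.edgeInv (w (Fin.last m))) (w 0)) :
    Odd (G.degreeIn (G.edgeDarts w) (G.edgeInv (w (Fin.last m)))) := by
  set v := G.edgeInv (w (Fin.last m))
  -- arrivals at `v` are the departures from `v` shifted by one, plus the final arrival
  have hbalance :
      #{i | G.SameVertex v (G.edgeInv (w i))} = #{i | G.SameVertex v (w i)} + 1 := by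
    rw [card_filter, card_filter, Fin.sum_univ_castSucc, Fin.sum_univ_succ, if_neg hopen,
      if_pos (SameVertex.refl v)]
    simp only [sameVertex_congr_right (hw.sameVertex_succ _)]
    ring
  rw [degreeIn_edgeDarts hw.edgeInjective, hbalance, Nat.odd_iff]
  omega

theorem IsTrail.exists_unused {S : Finset G.D} (heven : ∀ v, Even (G.degreeIn S v))
    (hw : G.IsTrail w) (hwS : G.edgeDarts w ⊆ S)
    (hopen : ¬ G.SameVertex (G.edgeInv (w (Fin.last m))) (w 0)) :
    ∃ e ∈ S, G.SameVertex (G.edgeInv (w (Fin.last m))) e ∧ e ∉ G.edgeDarts w := by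
  by_contra! hused
  have hdeg : G.degreeIn S (G.edgeInv (w (Fin.last m))) =
      G.degreeIn (G.edgeDarts w) (G.edgeInv (w (Fin.last m))) := by
    rw [degreeIn, degreeIn]
    congr 1
    ext e
    simp only [mem_filter]
    exact ⟨fun ⟨he, hv⟩ => ⟨hused e he hv, hv⟩, fun ⟨he, hv⟩ => ⟨hwS he, hv⟩⟩
  exact Nat.not_even_iff_odd.mpr (hw.odd_degreeIn_edgeDarts hopen) (hdeg ▸ heven _)

theorem IsTrail.snoc (hw : G.IsTrail w) {e : G.D}
    (hv : G.SameVertex (G.edgeInv (w (Fin.last m))) e) (he : e ∉ G.edgeDarts w) :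
    G.IsTrail (Fin.snoc w e : Fin (m + 2) → G.D) where
  sameVertex_succ i := by
    induction i using Fin.lastCases with
    | last => simpa only [Fin.snoc_castSucc, Fin.succ_last, Fin.snoc_last] using hv
    | cast j => simpa only [Fin.snoc_castSucc, Fin.succ_castSucc] using hw.sameVertex_succ j
  edgeInjective i j hij := by
    induction i using Fin.lastCases with
    | last =>
      induction j using Fin.lastCases with
      | last => rfl
      | cast j =>
        simp only [Fin.snoc_last, Fin.snoc_castSucc] at hij
        refine (he (mem_edgeDarts.mpr ⟨j, ?_⟩)).elim
        exact hij.imp Eq.symm fun h => edgeInv_eq_iff.mp h.symm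
    | cast i =>
      induction j using Fin.lastCases with
      | last =>
        simp only [Fin.snoc_last, Fin.snoc_castSucc] at hij
        exact (he (mem_edgeDarts.mpr ⟨i, hij⟩)).elim
      | cast j =>
        simp only [Fin.snoc_castSucc] at hij
        rw [hw.edgeInjective i j hij]

theorem exists_closedTrail_of_isTrail {S : Finset G.D} (hS : G.EdgeClosed S)
    (heven : ∀ v, Even (G.degreeIn S v)) {m : ℕ} {w : Fin (m + 1) → G.D} (hw : G.IsTrail w)
    (hwS : G.edgeDarts w ⊆ S) :
    ∃ T : ClosedTrail G, T.darts ⊆ S := by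
  by_cases hclosed : G.SameVertex (G.edgeInv (w (Fin.last m))) (w 0)
  · exact ⟨hw.toClosedTrail hclosed, hwS⟩
  obtain ⟨e, heS, hv, he⟩ := hw.exists_unused heven hwS hclosed
  have hlt : m + 1 < #S :=
    calc m + 1 = #(univ.image w) := by
          rw [card_image_of_injective _ hw.edgeInjective.injective, card_univ, Fintype.card_fin]
      _ ≤ #(G.edgeDarts w) := card_le_card subset_union_left
      _ < #S := card_lt_card ((ssubset_iff_of_subset hwS).mpr ⟨e, heS, he⟩)
  refine exists_closedTrail_of_isTrail hS heven (hw.snoc hv he)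
    ((edgeDarts_subset_iff hS).mpr fun i => ?_)
  induction i using Fin.lastCases with
  | last => rwa [Fin.snoc_last]
  | cast i => rw [Fin.snoc_castSucc]; exact hwS (mem_edgeDarts.mpr ⟨i, Or.inl rfl⟩)
termination_by #S - m

theorem exists_closedTrail {S : Finset G.D} (hS : G.EdgeClosed S)
    (heven : ∀ v, Even (G.degreeIn S v)) (hne : S.Nonempty) :
    ∃ T : ClosedTrail G, T.darts ⊆ S := by
  obtain ⟨d, hd⟩ := hne
  have hw : G.IsTrail fun _ : Fin 1 => d := ⟨fun i => i.elim0, fun i j _ => Fin.ext (by omega)⟩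
  exact exists_closedTrail_of_isTrail hS heven hw ((edgeDarts_subset_iff hS).mpr fun _ => hd)

structure IsDecomposition {n : ℕ} (S : Finset G.D) (C : Fin n → ClosedTrail G) : Prop where
  pairwise_disjoint : Pairwise fun i j => Disjoint (C i).darts (C j).darts
  mem_iff : ∀ e, e ∈ S ↔ ∃ i, e ∈ (C i).darts

theorem IsDecomposition.cons {S : Finset G.D} {n : ℕ} {T : ClosedTrail G}
    {C : Fin n → ClosedTrail G} (hT : T.darts ⊆ S) (hC : IsDecomposition (S \ T.darts) C) :
    IsDecomposition S (Fin.cons T C) where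
  pairwise_disjoint := by
    have hdisj : ∀ i, Disjoint T.darts (C i).darts := fun i =>
      disjoint_left.mpr fun e heT heC => (mem_sdiff.mp ((hC.mem_iff e).mpr ⟨i, heC⟩)).2 heT
    refine pairwise_fin_succ_iff.mpr ⟨fun i => ?_, fun i => ?_, fun i j hij => ?_⟩
    · simpa only [Fin.cons_zero, Fin.cons_succ] using (hdisj i).symm
    · simpa only [Fin.cons_zero, Fin.cons_succ] using hdisj i
    · simpa only [Fin.cons_succ] using hC.pairwise_disjoint hij
  mem_iff e := by
    simp only [Fin.exists_fin_succ, Fin.cons_zero, Fin.cons_succ, ← hC.mem_iff, mem_sdiff]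
    have := @hT e
    tauto

theorem exists_isDecomposition {S : Finset G.D} (hS : G.EdgeClosed S)
    (heven : ∀ v, Even (G.degreeIn S v)) :
    ∃ (n : ℕ) (C : Fin n → ClosedTrail G), IsDecomposition S C := by
  obtain rfl | hne := S.eq_empty_or_nonempty
  · exact ⟨0, Fin.elim0, fun i => i.elim0, by simp⟩
  obtain ⟨T, hT⟩ := exists_closedTrail hS heven hne
  have hlt : #(S \ T.darts) < #S :=
    card_lt_card (sdiff_ssubset hT ⟨T.dart 0, ClosedTrail.mem_darts.mpr ⟨0, Or.inl rfl⟩⟩)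
  obtain ⟨n, C, hC⟩ := exists_isDecomposition (hS.sdiff T.edgeClosed_darts)
    fun v => even_degreeIn_sdiff hT (heven v) (T.even_degreeIn_darts v)
  exact ⟨n + 1, Fin.cons T C, hC.cons hT⟩
termination_by #S

end StarGraph

/-- In a *-graph all of whose vertices have even degree, there is a Vassiliev
obstruct if and only if the edge set can be partitioned into edge-disjoint
cycles such that two of the cycles of the partition cross each other exactly
once. -/
theorem hasVassilievObstruct_iff_partition (G : StarGraph)
    (heven : ∀ d : G.D, Even (G.degree d)) :
    HasVassilievObstruct G ↔
      ∃ (n : ℕ) (C : Fin n → ClosedTrail G),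
        (∀ i j : Fin n, i ≠ j → (C i).EdgeDisjoint (C j)) ∧
        (∀ d : G.D, ∃ (i : Fin n) (k : ZMod (C i).len),
          (C i).dart k = d ∨ (C i).dart k = G.edgeInv d) ∧
        ∃ i j : Fin n, i ≠ j ∧
          Nat.card {p : ZMod (C i).len × ZMod (C j).len //
            (C i).IsCrossing (C j) p} = 1 := by
  constructor
  · rintro ⟨A, B, hAB, hcard⟩
    have hA : A.darts ⊆ univ := subset_univ _
    have hB : B.darts ⊆ univ \ A.darts :=
      subset_sdiff.mpr ⟨subset_univ _, (ClosedTrail.edgeDisjoint_iff.mp hAB).symm⟩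
    obtain ⟨n, C, hC⟩ := exists_isDecomposition
      ((edgeClosed_univ.sdiff A.edgeClosed_darts).sdiff B.edgeClosed_darts)
      fun v => even_degreeIn_sdiff hB
        (even_degreeIn_sdiff hA (degreeIn_univ v ▸ heven v) (A.even_degreeIn_darts v))
        (B.even_degreeIn_darts v)
    have hD := (hC.cons hB).cons hA
    refine ⟨n + 2, _, fun i j hij => ClosedTrail.edgeDisjoint_iff.mpr (hD.pairwise_disjoint hij),
      fun d => ?_, 0, 1, by simp, hcard⟩
    obtain ⟨i, hi⟩ := (hD.mem_iff d).mp (mem_univ d)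
    exact ⟨i, ClosedTrail.mem_darts.mp hi⟩
  · rintro ⟨n, C, hdisj, -, i, j, hij, hcard⟩
    exact ⟨C i, C j, hdisj i j hij, hcard⟩
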